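/- arXiv:1204.2498 — 4 statements merged into one kernel-verified Lean document; each statement's English description precedes it below -/
import Mathlib

section
/- Let λ, θ, α > 0, θ̃ := sqrt(θ² + 4α/λ), and C₁(T,S) := (λθ̃/2)·coth((θ̃/2)(T−S) + κ(S)) − λθ/2 with κ(S) := arcoth((2C₀(S)+θλ)/(θ̃λ)), where C₀(S) := sqrt(λα)·coth(sqrt(α/λ)·S). Then for every T > 0 and 0 < S₁ < S₂ < T: 0 < C₁(T,0) < C₁(T,S₁) < C₁(T,S₂) < C₀(T) ≤ λ/T + sqrt(αλ), where C₁(T,0) := (λθ̃/2)·coth(θ̃T/2) − λθ/2. -/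
/-!
Rescale time by `γ = √(α/λ)` and values by `λγ`. Then `C₀` becomes `coth u` and
`κ` becomes `u ↦ arcoth ((coth u + b) / c)` with `c² = 1 + b²`. With `y = coth u`, its
derivative is `c (y² - 1) / (y² - 1 + 2 b y) < c`, so `u ↦ c u - κ u` is strictly increasing,
and it tends to `0` at `0⁺` because `coth u → ∞`. Hence the argument `c (t - u) + κ u` of `coth`
in `C₁` decreases from `c t` (at `u = 0⁺`) to `κ t` (at `u = t`, where `C₁` equals `C₀`), and
`coth` is decreasing. The last bound is `coth x ≤ 1 + 1/x`, i.e. `e^{2x} - 1 ≥ 2x`.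
-/

noncomputable def coth (x : ℝ) : ℝ := Real.cosh x / Real.sinh x

noncomputable def arcoth (y : ℝ) : ℝ := (1 / 2) * Real.log ((y + 1) / (y - 1))

open Real Set Filter Topology

lemma coth_eq_one_add {x : ℝ} (hx : x ≠ 0) : coth x = 1 + 2 / (exp (2 * x) - 1) := by
  have h : exp x ^ 2 - 1 ≠ 0 := by
    rw [← exp_nat_mul, sub_ne_zero, Ne, exp_eq_one_iff]; simpa using hx
  rw [coth, cosh_eq, sinh_eq, exp_neg, show 2 * x = (2 : ℕ) * x by norm_num, exp_nat_mul]
  have : exp x - (exp x)⁻¹ = (exp x ^ 2 - 1) / exp x := by field_simp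
  rw [this]
  field_simp
  ring

lemma one_lt_coth {x : ℝ} (hx : 0 < x) : 1 < coth x := by
  have : 0 < exp (2 * x) - 1 := by linarith [add_one_lt_exp (by positivity : 2 * x ≠ 0)]
  rw [coth_eq_one_add hx.ne']
  linarith [div_pos two_pos this]

lemma coth_strictAntiOn : StrictAntiOn coth (Ioi 0) := by
  intro a (ha : 0 < a) b (hb : 0 < b) hab
  have h : 0 < exp (2 * a) - 1 := by linarith [add_one_lt_exp (by positivity : 2 * a ≠ 0)]
  rw [coth_eq_one_add ha.ne', coth_eq_one_add hb.ne']
  gcongr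

lemma coth_le_one_add_inv {x : ℝ} (hx : 0 < x) : coth x ≤ 1 + x⁻¹ := by
  have h : 2 * x ≤ exp (2 * x) - 1 := by linarith [add_one_le_exp (2 * x)]
  calc coth x = 1 + 2 / (exp (2 * x) - 1) := coth_eq_one_add hx.ne'
    _ ≤ 1 + 2 / (2 * x) := by gcongr
    _ = 1 + x⁻¹ := by field_simp

lemma exp_two_mul_arcoth {y : ℝ} (hy : 1 < y) : exp (2 * arcoth y) = (y + 1) / (y - 1) := by
  rw [arcoth, ← mul_assoc, show (2 : ℝ) * (1 / 2) = 1 by norm_num, one_mul,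
    exp_log (div_pos (by linarith) (by linarith))]

lemma arcoth_pos {y : ℝ} (hy : 1 < y) : 0 < arcoth y := by
  have : 1 < (y + 1) / (y - 1) := by rw [one_lt_div (by linarith)]; linarith
  rw [arcoth]
  exact mul_pos (by norm_num) (log_pos this)

lemma coth_arcoth {y : ℝ} (hy : 1 < y) : coth (arcoth y) = y := by
  have : y - 1 ≠ 0 := by linarith
  rw [coth_eq_one_add (arcoth_pos hy).ne', exp_two_mul_arcoth hy]
  field_simp
  ring

lemma hasDerivAt_coth {x : ℝ} (hx : x ≠ 0) : HasDerivAt coth (1 - coth x ^ 2) x := by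
  have hs : sinh x ≠ 0 := by simpa using hx
  refine ((hasDerivAt_cosh x).div (hasDerivAt_sinh x) hs).congr_deriv ?_
  rw [coth]
  field_simp

lemma hasDerivAt_arcoth {y : ℝ} (hy : 1 < y) : HasDerivAt arcoth (1 / (1 - y ^ 2)) y := by
  have h1 : y - 1 ≠ 0 := by linarith
  have h2 : y + 1 ≠ 0 := by linarith
  have hq : HasDerivAt (fun y => (y + 1) / (y - 1)) ((1 * (y - 1) - (y + 1) * 1) / (y - 1) ^ 2) y :=
    ((hasDerivAt_id y).add_const 1).div ((hasDerivAt_id y).sub_const 1) h1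
  refine ((hq.log (div_ne_zero h2 h1)).const_mul (1 / 2)).congr_deriv ?_
  have h3 : 1 - y ^ 2 ≠ 0 := by nlinarith
  field_simp
  ring

lemma tendsto_coth_nhdsGT_zero : Tendsto coth (𝓝[>] 0) atTop := by
  have hsinh : Tendsto sinh (𝓝[>] 0) (𝓝[>] 0) := by
    refine tendsto_nhdsWithin_iff.2 ⟨?_, ?_⟩
    · simpa using (continuous_sinh.tendsto 0).mono_left nhdsWithin_le_nhds
    · filter_upwards [self_mem_nhdsWithin] with x hx using sinh_pos_iff.2 hx
  have hcosh : Tendsto cosh (𝓝[>] 0) (𝓝 1) := by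
    simpa using (continuous_cosh.tendsto 0).mono_left nhdsWithin_le_nhds
  exact hcosh.pos_mul_atTop one_pos (tendsto_inv_nhdsGT_zero.comp hsinh)

lemma tendsto_arcoth_atTop : Tendsto arcoth atTop (𝓝 0) := by
  have h : Tendsto (fun y : ℝ => (1 : ℝ) + 2 / (y - 1)) atTop (𝓝 1) := by
    simpa [sub_eq_add_neg] using tendsto_const_nhds.add
      (tendsto_const_nhds.div_atTop (tendsto_atTop_add_const_right _ (-1 : ℝ) tendsto_id))
  have hq : Tendsto (fun y : ℝ => (y + 1) / (y - 1)) atTop (𝓝 1) := by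
    refine h.congr' ?_
    filter_upwards [eventually_gt_atTop 1] with y hy
    field_simp [show y - 1 ≠ 0 by linarith]
    ring
  convert ((continuousAt_log one_ne_zero).tendsto.comp hq).const_mul (1 / 2) using 2
  · rfl
  · simp

lemma StrictMonoOn.lt_of_tendsto_nhdsGT {α β : Type*} [LinearOrder α] [TopologicalSpace α]
    [OrderTopology α] [DenselyOrdered α] [LinearOrder β] [TopologicalSpace β] [ClosedIicTopology β]
    {f : α → β} {a x : α} {L : β} (hf : StrictMonoOn f (Ioi a)) (hL : Tendsto f (𝓝[>] a) (𝓝 L))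
    (hx : a < x) : L < f x := by
  have : (𝓝[>] a).NeBot := nhdsGT_neBot_of_exists_gt ⟨x, hx⟩
  obtain ⟨y, hay, hyx⟩ := exists_between hx
  have : L ≤ f y := by
    refine le_of_tendsto hL ?_
    filter_upwards [Ioo_mem_nhdsGT hay] with z hz
    exact (hf hz.1 hay hz.2).le
  exact this.trans_lt (hf hay (hay.trans hyx) hyx)

/-- The paper's `κ(S)` is `kappa (θ / 2γ) (θ̃ / 2γ) (γ S)` with `γ = √(α/λ)`. -/
noncomputable def kappa (b c u : ℝ) : ℝ := arcoth ((coth u + b) / c)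

section
variable {b c : ℝ}

lemma one_lt_coth_add_div (hb : 0 ≤ b) (hc : 0 < c) (hcb : c ^ 2 = 1 + b ^ 2) {u : ℝ}
    (hu : 0 < u) : 1 < (coth u + b) / c := by
  have : c ≤ 1 + b := by nlinarith
  rw [one_lt_div hc]
  linarith [one_lt_coth hu]

lemma hasDerivAt_kappa (hb : 0 ≤ b) (hc : 0 < c) (hcb : c ^ 2 = 1 + b ^ 2) {u : ℝ} (hu : 0 < u) :
    HasDerivAt (kappa b c) (c * (coth u ^ 2 - 1) / ((coth u + b) ^ 2 - c ^ 2)) u := by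
  have hf := one_lt_coth_add_div hb hc hcb hu
  refine ((hasDerivAt_arcoth hf).comp u
    (((hasDerivAt_coth hu.ne').add_const b).div_const c)).congr_deriv ?_
  have hyb : c < coth u + b := (one_lt_div hc).1 hf
  have : c ^ 2 - (coth u + b) ^ 2 ≠ 0 := by nlinarith
  have : (coth u + b) ^ 2 - c ^ 2 ≠ 0 := by nlinarith
  field_simp
  ring

lemma kappa_deriv_lt (hb : 0 < b) (hc : 0 < c) (hcb : c ^ 2 = 1 + b ^ 2) {y : ℝ} (hy : 1 < y) :
    c * (y ^ 2 - 1) / ((y + b) ^ 2 - c ^ 2) < c := by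
  have hden : (y + b) ^ 2 - c ^ 2 = y ^ 2 - 1 + 2 * b * y := by rw [hcb]; ring
  rw [hden, div_lt_iff₀ (by nlinarith)]
  nlinarith [mul_pos hc (mul_pos hb (by linarith : (0 : ℝ) < y))]

lemma strictMonoOn_mul_sub_kappa (hb : 0 < b) (hc : 0 < c) (hcb : c ^ 2 = 1 + b ^ 2) :
    StrictMonoOn (fun u => c * u - kappa b c u) (Ioi 0) := by
  have hderiv (u : ℝ) (hu : 0 < u) : HasDerivAt (fun u => c * u - kappa b c u)
      (c - c * (coth u ^ 2 - 1) / ((coth u + b) ^ 2 - c ^ 2)) u :=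
    (((hasDerivAt_id u).const_mul c).sub (hasDerivAt_kappa hb.le hc hcb hu)).congr_deriv
      (by rw [mul_one])
  refine strictMonoOn_of_deriv_pos (convex_Ioi 0) (fun u hu => ?_) (fun u hu => ?_)
  · exact (hderiv u hu).continuousAt.continuousWithinAt
  · rw [interior_Ioi] at hu
    rw [(hderiv u hu).deriv, sub_pos]
    exact kappa_deriv_lt hb hc hcb (one_lt_coth hu)

lemma tendsto_kappa_nhdsGT_zero (hc : 0 < c) : Tendsto (kappa b c) (𝓝[>] 0) (𝓝 0) :=
  tendsto_arcoth_atTop.comp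
    ((tendsto_atTop_add_const_right _ b tendsto_coth_nhdsGT_zero).atTop_div_const hc)

lemma kappa_lt_mul (hb : 0 < b) (hc : 0 < c) (hcb : c ^ 2 = 1 + b ^ 2) {u : ℝ} (hu : 0 < u) :
    kappa b c u < c * u := by
  have hlim : Tendsto (fun u => c * u - kappa b c u) (𝓝[>] 0) (𝓝 0) := by
    simpa using ((continuous_const_mul c).tendsto 0).mono_left nhdsWithin_le_nhds |>.sub
      (tendsto_kappa_nhdsGT_zero hc)
  linarith [(strictMonoOn_mul_sub_kappa hb hc hcb).lt_of_tendsto_nhdsGT hlim hu]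

lemma kappa_chain (hb : 0 < b) (hc : 0 < c) (hcb : c ^ 2 = 1 + b ^ 2) {u₁ u₂ t : ℝ}
    (hu₁ : 0 < u₁) (h₁₂ : u₁ < u₂) (h₂t : u₂ < t) :
    0 < kappa b c t ∧ kappa b c t < c * (t - u₂) + kappa b c u₂ ∧
      c * (t - u₂) + kappa b c u₂ < c * (t - u₁) + kappa b c u₁ ∧
      c * (t - u₁) + kappa b c u₁ < c * t := by
  have hu₂ : 0 < u₂ := hu₁.trans h₁₂
  have hmono := strictMonoOn_mul_sub_kappa hb hc hcb
  have h₂ := hmono hu₂ (hu₂.trans h₂t) h₂t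
  have h₁ := hmono hu₁ hu₂ h₁₂
  refine ⟨arcoth_pos (one_lt_coth_add_div hb.le hc hcb (hu₂.trans h₂t)), ?_, ?_, ?_⟩
  · simp only at h₂; linarith
  · simp only at h₁; linarith
  · linarith [kappa_lt_mul hb hc hcb hu₁]

lemma kappa_coth_chain (hb : 0 < b) (hc : 0 < c) (hcb : c ^ 2 = 1 + b ^ 2) {u₁ u₂ t : ℝ}
    (hu₁ : 0 < u₁) (h₁₂ : u₁ < u₂) (h₂t : u₂ < t) :
    0 < c * coth (c * t) - b ∧
      c * coth (c * t) - b < c * coth (c * (t - u₁) + kappa b c u₁) - b ∧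
      c * coth (c * (t - u₁) + kappa b c u₁) - b < c * coth (c * (t - u₂) + kappa b c u₂) - b ∧
      c * coth (c * (t - u₂) + kappa b c u₂) - b < coth t := by
  have ht : 0 < t := hu₁.trans (h₁₂.trans h₂t)
  have hanti {x y : ℝ} (hx : 0 < x) (hxy : x < y) : c * coth y - b < c * coth x - b := by
    gcongr c * ?_ - _
    exact coth_strictAntiOn hx (hx.trans hxy) hxy
  have hcoth_t : c * coth (kappa b c t) - b = coth t := by
    rw [kappa, coth_arcoth (one_lt_coth_add_div hb.le hc hcb ht)]
    field_simp
    ring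
  obtain ⟨hpos, h₂, h₁, h₀⟩ := kappa_chain hb hc hcb hu₁ h₁₂ h₂t
  refine ⟨?_, hanti (by linarith) h₀, hanti (by linarith) h₁, hcoth_t ▸ hanti hpos h₂⟩
  have hbc : b < c := by nlinarith
  nlinarith [mul_lt_mul_of_pos_left (one_lt_coth (mul_pos hc ht)) hc]

end

lemma sqrt_mul_eq_mul_sqrt_div {a : ℝ} (ha : 0 < a) (b : ℝ) : √(a * b) = a * √(b / a) := by
  rw [show a * b = a ^ 2 * (b / a) by field_simp, sqrt_mul (sq_nonneg _), sqrt_sq ha.le]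

theorem stmt6 (lam th al T S1 S2 : ℝ) (hlam : 0 < lam) (hth : 0 < th) (hal : 0 < al)
    (hS1 : 0 < S1) (h12 : S1 < S2) (h2T : S2 < T)
    (thT : ℝ) (hthT : thT = Real.sqrt (th ^ 2 + 4 * al / lam))
    (C0 : ℝ → ℝ)
    (hC0 : ∀ S, C0 S = Real.sqrt (lam * al) * coth (Real.sqrt (al / lam) * S))
    (kap : ℝ → ℝ)
    (hkap : ∀ S, kap S = arcoth ((2 * C0 S + th * lam) / (thT * lam)))
    (C1 : ℝ → ℝ → ℝ)
    (hC1 : ∀ t S, C1 t S = lam * thT / 2 * coth (thT / 2 * (t - S) + kap S) - lam * th / 2)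
    (C1T0 : ℝ) (hC1T0 : C1T0 = lam * thT / 2 * coth (thT * T / 2) - lam * th / 2) :
    0 < C1T0 ∧ C1T0 < C1 T S1 ∧ C1 T S1 < C1 T S2 ∧ C1 T S2 < C0 T ∧
      C0 T ≤ lam / T + Real.sqrt (al * lam) := by
  set γ := √(al / lam)
  have hγ : 0 < γ := sqrt_pos.2 (by positivity)
  have hγ2 : γ ^ 2 = al / lam := sq_sqrt (by positivity)
  have hm : √(lam * al) = lam * γ := sqrt_mul_eq_mul_sqrt_div hlam al
  have hthT0 : 0 < thT := by rw [hthT]; positivity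
  set b := th / (2 * γ)
  set c := thT / (2 * γ)
  have hcb : c ^ 2 = 1 + b ^ 2 := by
    simp only [b, c, div_pow, mul_pow, hthT, hγ2,
      sq_sqrt (by positivity : 0 ≤ th ^ 2 + 4 * al / lam)]
    field_simp
    ring
  have hC0' (S : ℝ) : C0 S = lam * γ * coth (γ * S) := by rw [hC0, hm]
  have hC1' (S : ℝ) :
      C1 T S = lam * γ * (c * coth (c * (γ * T - γ * S) + kappa b c (γ * S)) - b) := by
    rw [hC1, hkap, hC0', kappa]
    simp only [b, c]
    field_simp
  have hC1T0' : C1T0 = lam * γ * (c * coth (c * (γ * T)) - b) := by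
    rw [hC1T0]
    simp only [b, c]
    field_simp
  have hscale : 0 < lam * γ := mul_pos hlam hγ
  obtain ⟨h₀, h₁, h₂, h₃⟩ := kappa_coth_chain (by positivity) (by positivity) hcb
    (mul_pos hγ hS1) (mul_lt_mul_of_pos_left h12 hγ) (mul_lt_mul_of_pos_left h2T hγ)
  rw [hC1T0', hC1', hC1', hC0']
  refine ⟨mul_pos hscale h₀, mul_lt_mul_of_pos_left h₁ hscale, mul_lt_mul_of_pos_left h₂ hscale,
    mul_lt_mul_of_pos_left h₃ hscale, ?_⟩
  calc lam * γ * coth (γ * T) ≤ lam * γ * (1 + (γ * T)⁻¹) := by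
        gcongr; exact coth_le_one_add_inv (mul_pos hγ (by linarith))
    _ = lam / T + √(al * lam) := by rw [mul_comm al, hm]; field_simp; ring
end

section
/- Let λ, θ, α, γ > 0 and θ̃ := sqrt(θ²+4α/λ). The function X̄(T,0) := (γ/(θ̃θλ) + θγ/(2θ̃α))·sinh(θ̃T/2)·exp(−θT/2) + (γ/(2α))·cosh(θ̃T/2)·exp(−θT/2) − γ/(2α) satisfies X̄(T,0) > 0 for all T > 0 and lim_{T→0+} X̄(T,0) = 0. -/
/-!
Expanding `sinh` and `cosh` into exponentials rewrites `X̄(T,0)` as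
`P (e^{(θ̃-θ)T/2} - 1) + Q (1 - e^{-(θ̃+θ)T/2})` with `P = (C + D)/2`, `Q = (C - D)/2`,
where `C` and `D` are the coefficients of `sinh` and `cosh`. Both brackets are positive for
`T > 0` because `θ̃ > θ`, and `Q > 0` reduces, via `λθ̃² = λθ² + 4α`, to `λ(θ̃ - θ)² > 0`.
-/

open Real Filter Topology

lemma sinh_mul_exp_add_cosh_mul_exp_sub (C D x y : ℝ) :
    C * sinh x * exp (-y) + D * cosh x * exp (-y) - D =
      (C + D) / 2 * (exp (x - y) - 1) + (C - D) / 2 * (1 - exp (-(x + y))) := by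
  rw [sinh_eq, cosh_eq, sub_eq_add_neg x y, neg_add, exp_add, exp_add]
  ring

lemma sinh_mul_exp_add_cosh_mul_exp_sub_pos {C D x y : ℝ} (hDC : |D| < C) (hyx : y < x)
    (hxy : 0 ≤ x + y) :
    0 < C * sinh x * exp (-y) + D * cosh x * exp (-y) - D := by
  obtain ⟨hCD, hDC⟩ := abs_lt.1 hDC
  rw [sinh_mul_exp_add_cosh_mul_exp_sub]
  have hgrow : 0 < exp (x - y) - 1 := sub_pos.2 (one_lt_exp_iff.2 (sub_pos.2 hyx))
  have hdecay : 0 ≤ 1 - exp (-(x + y)) := sub_nonneg.2 (exp_le_one_iff.2 (neg_nonpos.2 hxy))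
  exact add_pos_of_pos_of_nonneg (mul_pos (by linarith) hgrow)
    (mul_nonneg (by linarith) hdecay)

lemma div_lt_div_add_div_of_sq_eq {lam th al ga thT : ℝ} (hlam : 0 < lam) (hth : 0 < th)
    (hal : 0 < al) (hga : 0 < ga) (hlt : th < thT) (hthT : thT ^ 2 = th ^ 2 + 4 * al / lam) :
    ga / (2 * al) < ga / (thT * th * lam) + th * ga / (2 * thT * al) := by
  have hthT0 : 0 < thT := hth.trans hlt
  have hal4 : 4 * al = lam * (thT ^ 2 - th ^ 2) := by
    rw [hthT]; field_simp; ring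
  have hkey : thT * th * lam < 2 * al + th ^ 2 * lam := by
    nlinarith [mul_pos hlam (pow_pos (sub_pos.2 hlt) 2)]
  rw [div_add_div _ _ (by positivity) (by positivity), div_lt_div_iff₀ (by positivity)
    (by positivity)]
  nlinarith [mul_lt_mul_of_pos_left hkey (by positivity : 0 < 2 * al * ga * thT)]

theorem stmt10 (lam th al ga : ℝ) (hlam : 0 < lam) (hth : 0 < th) (hal : 0 < al)
    (hga : 0 < ga)
    (thT : ℝ) (hthT : thT = Real.sqrt (th ^ 2 + 4 * al / lam))
    (Xbar0 : ℝ → ℝ)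
    (hXbar0 : ∀ T, Xbar0 T =
      (ga / (thT * th * lam) + th * ga / (2 * thT * al)) *
        Real.sinh (thT * T / 2) * Real.exp (-(th * T / 2)) +
      (ga / (2 * al)) * Real.cosh (thT * T / 2) * Real.exp (-(th * T / 2)) -
      ga / (2 * al)) :
    (∀ T > 0, 0 < Xbar0 T) ∧
    Filter.Tendsto Xbar0 (nhdsWithin 0 (Set.Ioi 0)) (nhds 0) := by
  have hrad : 0 < th ^ 2 + 4 * al / lam := by positivity
  have hlt : th < thT :=
    hthT ▸ (lt_sqrt hth.le).2 (by linarith [show 0 < 4 * al / lam by positivity])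
  have hsq : thT ^ 2 = th ^ 2 + 4 * al / lam := hthT ▸ sq_sqrt hrad.le
  have hcoef := div_lt_div_add_div_of_sq_eq hlam hth hal hga hlt hsq
  constructor
  · intro T hT
    rw [hXbar0]
    have hTlt : th * T < thT * T := mul_lt_mul_of_pos_right hlt hT
    have hthT_pos : 0 < th * T := by positivity
    refine sinh_mul_exp_add_cosh_mul_exp_sub_pos ?_ (by linarith) (by linarith)
    rwa [abs_of_pos (by positivity)]
  · have hcont : Continuous Xbar0 := by
      rw [funext hXbar0]; fun_prop
    have hzero : Xbar0 0 = 0 := by simp [hXbar0]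
    simpa [hzero] using (hcont.tendsto 0).mono_left nhdsWithin_le_nhds
end

section
/- Let X : [0,T) → ℝ be absolutely continuous, nonzero initial value x, satisfying X'(t) = −ξ(t) with |ξ(t)| ≥ (C₁(T−t,0)/λ)·|X(t)| and X(t)·ξ(t) ≥ 0, where C₁(T−t,0) := (λθ̃/2)·coth((θ̃/2)(T−t)) − λθ/2 > 0. Then |X(t)| ≤ |x|·exp(θt/2)·sinh((θ̃/2)(T−t))/sinh((θ̃/2)T) for all t ∈ [0,T), and in particular lim_{t→T−} X(t) = 0. -/
open Set Filter Topology

theorem antitoneOn_div_of_hasDerivAt_le_mul {f g f' c : ℝ → ℝ} {a b : ℝ}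
    (hf : ∀ t ∈ Ico a b, HasDerivAt f (f' t) t)
    (hg : ∀ t ∈ Ico a b, HasDerivAt g (c t * g t) t)
    (hg_pos : ∀ t ∈ Ico a b, 0 < g t)
    (hf' : ∀ t ∈ Ico a b, f' t ≤ c t * f t) :
    AntitoneOn (fun t => f t / g t) (Ico a b) := by
  have hquot : ∀ t ∈ Ico a b,
      HasDerivAt (fun t => f t / g t) ((f' t * g t - f t * (c t * g t)) / g t ^ 2) t :=
    fun t ht => (hf t ht).div (hg t ht) (hg_pos t ht).ne'
  have hint : interior (Ico a b) ⊆ Ico a b := interior_subset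
  refine antitoneOn_of_hasDerivWithinAt_nonpos (convex_Ico a b)
    (fun t ht => (hquot t ht).continuousAt.continuousWithinAt)
    (fun t ht => (hquot t (hint ht)).hasDerivWithinAt) fun t ht => ?_
  have hgt := hg_pos t (hint ht)
  have hnum : f' t * g t - f t * (c t * g t) ≤ 0 := by
    nlinarith [hf' t (hint ht)]
  exact div_nonpos_of_nonpos_of_nonneg hnum (by positivity)

theorem abs_le_of_antitoneOn_sq_div_sq {f B : ℝ → ℝ} {a b t : ℝ}
    (hB : ∀ s ∈ Ico a b, 0 < B s) (hanti : AntitoneOn (fun s => f s ^ 2 / B s ^ 2) (Ico a b))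
    (ht : t ∈ Ico a b) : |f t| ≤ |f a| * B t / B a := by
  have ha : a ∈ Ico a b := ⟨le_rfl, ht.1.trans_lt ht.2⟩
  have hBa := hB a ha
  have hBt := hB t ht
  have hsq : f t ^ 2 ≤ (|f a| * B t / B a) ^ 2 := by
    have h := hanti ha ht ht.1
    simp only at h
    rw [div_le_div_iff₀ (by positivity) (by positivity)] at h
    rw [div_pow, mul_pow, sq_abs, le_div_iff₀ (by positivity)]
    linarith
  exact abs_le_of_sq_le_sq hsq (by positivity)

section Envelope

variable (θ θ' T : ℝ)

noncomputable def envelope (t : ℝ) : ℝ := Real.exp (θ * t / 2) * Real.sinh (θ' / 2 * (T - t))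

theorem envelope_pos (hθ' : 0 < θ') {t : ℝ} (ht : t < T) : 0 < envelope θ θ' T t :=
  mul_pos (Real.exp_pos _) (Real.sinh_pos_iff.mpr (mul_pos (half_pos hθ') (sub_pos.mpr ht)))

theorem envelope_zero : envelope θ θ' T 0 = Real.sinh (θ' / 2 * T) := by
  simp [envelope]

theorem tendsto_envelope_nhdsLT : Tendsto (envelope θ θ' T) (𝓝[<] T) (𝓝 0) := by
  have hcont : Continuous (envelope θ θ' T) := by unfold envelope; fun_prop
  simpa [envelope] using (hcont.tendsto T).mono_left nhdsWithin_le_nhds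

theorem hasDerivAt_envelope {t : ℝ} (ht : Real.sinh (θ' / 2 * (T - t)) ≠ 0) :
    HasDerivAt (envelope θ θ' T)
      (-(θ' / 2 * coth (θ' / 2 * (T - t)) - θ / 2) * envelope θ θ' T t) t := by
  have hexp : HasDerivAt (fun t => Real.exp (θ * t / 2)) (Real.exp (θ * t / 2) * (θ / 2)) t := by
    simpa using (((hasDerivAt_id t).const_mul θ).div_const 2).exp
  have hsinh : HasDerivAt (fun t => Real.sinh (θ' / 2 * (T - t)))
      (Real.cosh (θ' / 2 * (T - t)) * -(θ' / 2)) t := by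
    simpa using (((hasDerivAt_id t).const_sub T).const_mul (θ' / 2)).sinh
  refine (hexp.fun_mul hsinh).congr_deriv ?_
  simp only [envelope, coth]
  generalize Real.sinh (θ' / 2 * (T - t)) = s at ht ⊢
  field_simp
  ring

end Envelope

theorem stmt15_general (lam th al T x : ℝ) (hlam : 0 < lam) (hal : 0 < al)
    (hT : 0 < T)
    (thT : ℝ) (hthT : thT = Real.sqrt (th ^ 2 + 4 * al / lam))
    (X xi : ℝ → ℝ) (hX0 : X 0 = x)
    (hderiv : ∀ t ∈ Set.Ico (0:ℝ) T, HasDerivAt X (-(xi t)) t)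
    (hxi : ∀ t ∈ Set.Ico (0:ℝ) T,
      ((lam * thT / 2 * coth (thT / 2 * (T - t)) - lam * th / 2) / lam) * |X t| ≤ |xi t|)
    (hsign : ∀ t ∈ Set.Ico (0:ℝ) T, 0 ≤ X t * xi t) :
    (∀ t ∈ Set.Ico (0:ℝ) T,
      |X t| ≤ |x| * Real.exp (th * t / 2) * Real.sinh (thT / 2 * (T - t)) /
        Real.sinh (thT / 2 * T)) ∧
    Filter.Tendsto X (nhdsWithin T (Set.Iio T)) (nhds 0) := by
  have hthT_pos : 0 < thT := hthT ▸ Real.sqrt_pos.mpr (by positivity)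
  set B := envelope th thT T
  set k : ℝ → ℝ := fun t => thT / 2 * coth (thT / 2 * (T - t)) - th / 2
  have hB_pos : ∀ t ∈ Ico 0 T, 0 < B t := fun t ht => envelope_pos th thT T hthT_pos ht.2
  have hB2 : ∀ t ∈ Ico 0 T, HasDerivAt (fun t => B t ^ 2) (-2 * k t * B t ^ 2) t := by
    intro t ht
    have hsinh : Real.sinh (thT / 2 * (T - t)) ≠ 0 :=
      (Real.sinh_pos_iff.mpr (mul_pos (half_pos hthT_pos) (sub_pos.mpr ht.2))).ne'
    refine ((hasDerivAt_envelope th thT T hsinh).pow 2).congr_deriv ?_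
    ring
  have hX2 : ∀ t ∈ Ico 0 T, HasDerivAt (fun t => X t ^ 2) (2 * X t * -(xi t)) t := by
    intro t ht
    refine ((hderiv t ht).pow 2).congr_deriv ?_
    ring
  have hdecay : ∀ t ∈ Ico 0 T, 2 * X t * -(xi t) ≤ -2 * k t * X t ^ 2 := by
    intro t ht
    have hk : (lam * thT / 2 * coth (thT / 2 * (T - t)) - lam * th / 2) / lam = k t := by
      simp only [k]
      field_simp
    have hxi_t := hxi t ht
    rw [hk] at hxi_t
    have hXxi : X t * xi t = |X t| * |xi t| := by rw [← abs_mul, abs_of_nonneg (hsign t ht)]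
    rw [← sq_abs, sq]
    linarith [mul_le_mul_of_nonneg_left hxi_t (abs_nonneg (X t))]
  have hbound : ∀ t ∈ Ico 0 T, |X t| ≤ |x| * B t / B 0 := fun t ht => hX0 ▸
    abs_le_of_antitoneOn_sq_div_sq hB_pos
      (antitoneOn_div_of_hasDerivAt_le_mul hX2 hB2 (fun s hs => pow_pos (hB_pos s hs) 2) hdecay) ht
  refine ⟨fun t ht => ?_, ?_⟩
  · simpa only [B, envelope_zero, envelope, mul_assoc] using hbound t ht
  · refine squeeze_zero_norm' ?_ (by simpa using
      ((tendsto_envelope_nhdsLT th thT T).const_mul |x|).div_const (B 0))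
    filter_upwards [Ioo_mem_nhdsLT hT] with t ht
    exact hbound t (Ioo_subset_Ico_self ht)

theorem stmt15 (lam th al T x : ℝ) (hlam : 0 < lam) (hth : 0 < th) (hal : 0 < al)
    (hT : 0 < T) (hx : x ≠ 0)
    (thT : ℝ) (hthT : thT = Real.sqrt (th ^ 2 + 4 * al / lam))
    (X xi : ℝ → ℝ) (hX0 : X 0 = x)
    (hderiv : ∀ t ∈ Set.Ico (0:ℝ) T, HasDerivAt X (-(xi t)) t)
    (hxi : ∀ t ∈ Set.Ico (0:ℝ) T,
      ((lam * thT / 2 * coth (thT / 2 * (T - t)) - lam * th / 2) / lam) * |X t| ≤ |xi t|)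
    (hsign : ∀ t ∈ Set.Ico (0:ℝ) T, 0 ≤ X t * xi t) :
    (∀ t ∈ Set.Ico (0:ℝ) T,
      |X t| ≤ |x| * Real.exp (th * t / 2) * Real.sinh (thT / 2 * (T - t)) /
        Real.sinh (thT / 2 * T)) ∧
    Filter.Tendsto X (nhdsWithin T (Set.Iio T)) (nhds 0) :=
  stmt15_general lam th al T x hlam hal hT thT hthT X xi hX0 hderiv hxi hsign
end

section
/- Let T > 0, λ, θ, α > 0 fixed, and consider the value function coefficient C₂(T, S, γ) from the explicit formula: C₂(T,S,γ) = (γ/(2α))·(−θλ + [λθ̃(sinh((θ̃/2)(T−S)) + μ(S)cosh((θ̃/2)(T−S))) − 2C₀(S)exp((θ/2)(S−T))]/[μ(S)sinh((θ̃/2)(T−S)) + cosh((θ̃/2)(T−S))]). Then C₂ is linear and strictly increasing in γ > 0, provided the bracketed factor is strictly positive, which holds for all 0 < S < T. -/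
open Real Set

theorem coth_pos {x : ℝ} (hx : 0 < x) : 0 < coth x :=
  div_pos (cosh_pos x) (sinh_pos_iff.2 hx)

theorem mul_exp_neg_le_mul_cosh_sub_mul_sinh {a b : ℝ} (ha : 0 < a) (hb : |b| ≤ a) (t : ℝ) :
    a * exp (-(b * t)) ≤ a * cosh (a * t) - b * sinh (a * t) := by
  obtain ⟨hb₁, hb₂⟩ := abs_le.1 hb
  have hw₁ : 0 ≤ (a - b) / (2 * a) := div_nonneg (by linarith) (by positivity)
  have hw₂ : 0 ≤ (a + b) / (2 * a) := div_nonneg (by linarith) (by positivity)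
  have hconv := convexOn_exp.2 (mem_univ (a * t)) (mem_univ (-(a * t))) hw₁ hw₂
    (by field_simp; ring)
  simp only [smul_eq_mul] at hconv
  rw [show (a - b) / (2 * a) * (a * t) + (a + b) / (2 * a) * -(a * t) = -(b * t) by
    field_simp; ring] at hconv
  calc a * exp (-(b * t))
      ≤ a * ((a - b) / (2 * a) * exp (a * t) + (a + b) / (2 * a) * exp (-(a * t))) :=
        mul_le_mul_of_nonneg_left hconv ha.le
    _ = a * cosh (a * t) - b * sinh (a * t) := by
        rw [cosh_eq, sinh_eq]; field_simp; ring

theorem mul_denominator_lt_numerator {lam th al thT C0 mu s c e : ℝ} (hal : 0 < al) (hthT : 0 < thT)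
    (hC0 : 0 < C0) (hs : 0 < s) (hthT2 : lam * thT ^ 2 = lam * th ^ 2 + 4 * al)
    (hmu : mu * (thT * lam) = 2 * C0 + th * lam) (he : thT * e ≤ thT * c - th * s) :
    th * lam * (mu * s + c) < lam * thT * (s + mu * c) - 2 * C0 * e := by
  have hid : (lam * thT * (s + mu * c) - 2 * C0 * e - th * lam * (mu * s + c)) * thT
      = 4 * al * s + 2 * C0 * (thT * c - th * s - thT * e) := by
    linear_combination (thT * c - th * s) * hmu + s * hthT2
  have hpos : 0 < 4 * al * s + 2 * C0 * (thT * c - th * s - thT * e) :=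
    add_pos_of_pos_of_nonneg (by positivity) (mul_nonneg (by positivity) (by linarith))
  exact sub_pos.1 (pos_of_mul_pos_left (hid ▸ hpos) hthT.le)

theorem stmt19 (lam th al T S : ℝ) (hlam : 0 < lam) (hth : 0 < th) (hal : 0 < al)
    (hS : 0 < S) (hST : S < T)
    (thT : ℝ) (hthT : thT = Real.sqrt (th ^ 2 + 4 * al / lam))
    (C0S : ℝ) (hC0S : C0S = Real.sqrt (lam * al) * coth (Real.sqrt (al / lam) * S))
    (mu : ℝ) (hmu : mu = (2 * C0S + th * lam) / (thT * lam))
    (F : ℝ)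
    (hF : F = (1 / (2 * al)) * (-(th * lam) +
      (lam * thT * (Real.sinh (thT / 2 * (T - S)) + mu * Real.cosh (thT / 2 * (T - S)))
        - 2 * C0S * Real.exp (th / 2 * (S - T))) /
      (mu * Real.sinh (thT / 2 * (T - S)) + Real.cosh (thT / 2 * (T - S)))))
    (C2 : ℝ → ℝ)
    (hC2 : ∀ ga, C2 ga = (ga / (2 * al)) * (-(th * lam) +
      (lam * thT * (Real.sinh (thT / 2 * (T - S)) + mu * Real.cosh (thT / 2 * (T - S)))
        - 2 * C0S * Real.exp (th / 2 * (S - T))) /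
      (mu * Real.sinh (thT / 2 * (T - S)) + Real.cosh (thT / 2 * (T - S))))) :
    0 < F ∧ (∀ ga, C2 ga = ga * F) ∧ StrictMonoOn C2 (Set.Ioi 0) := by
  have hthTpos : 0 < thT := hthT ▸ sqrt_pos.2 (by positivity)
  have hthT2 : lam * thT ^ 2 = lam * th ^ 2 + 4 * al := by
    rw [hthT, sq_sqrt (by positivity)]; field_simp
  have habs : |th| ≤ thT := hthT ▸ abs_le_sqrt (le_add_of_nonneg_right (by positivity))
  have hC0 : 0 < C0S := hC0S ▸ mul_pos (sqrt_pos.2 (by positivity)) (coth_pos (by positivity))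
  have hmu' : mu * (thT * lam) = 2 * C0S + th * lam := by rw [hmu]; field_simp
  have hsinh : 0 < sinh (thT / 2 * (T - S)) := sinh_pos_iff.2 (by nlinarith)
  have hD : 0 < mu * sinh (thT / 2 * (T - S)) + cosh (thT / 2 * (T - S)) := by
    have : 0 < mu := hmu ▸ by positivity
    positivity
  have hexp := mul_exp_neg_le_mul_cosh_sub_mul_sinh hthTpos habs ((T - S) / 2)
  rw [show thT * ((T - S) / 2) = thT / 2 * (T - S) by ring,
    show -(th * ((T - S) / 2)) = th / 2 * (S - T) by ring] at hexp
  have hbracket := (lt_div_iff₀ hD).2 <|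
    mul_denominator_lt_numerator hal hthTpos hC0 hsinh hthT2 hmu' hexp
  have hF_pos : 0 < F := hF ▸ mul_pos (by positivity) (by linarith)
  have hlin : ∀ ga, C2 ga = ga * F := fun ga => by rw [hC2, hF]; ring
  refine ⟨hF_pos, hlin, ?_⟩
  rw [show C2 = fun ga => ga * F from funext hlin]
  exact (strictMono_mul_right_of_pos hF_pos).strictMonoOn _
end
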